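/- Let A, B, C be fuzzy linear codes in F_q^n. If A ⊥ B and A ⊥ C (i.e., both B and C are orthogonal to A), then B = C as functions on F_q^n. In other words, the orthogonal (dual) fuzzy linear code of A, when it exists, is unique. -/

import Mathlib

open scoped BigOperators

/-- A fuzzy set in `V`: a membership function with values in `[0,1]`. -/
def IsFuzzySet {V : Type*} (A : V → ℝ) : Prop :=
  ∀ x, 0 ≤ A x ∧ A x ≤ 1

/-- The upper `α`-level cut of a fuzzy set `A`. -/
def levelCut {V : Type*} (A : V → ℝ) (α : ℝ) : Set V :=
  {x | α ≤ A x}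

/-- A set of vectors is an `F`-linear subspace. -/
def IsFLinearSubspaceSet (F : Type*) {V : Type*} [Field F] [AddCommGroup V] [Module F V]
    (s : Set V) : Prop :=
  ∃ W : Submodule F V, s = (W : Set V)

/-- A fuzzy linear code: a fuzzy set all of whose nonempty upper `α`-level cuts
(for `α ∈ [0,1]`) are linear subspaces. -/
def IsFuzzyLinearCode (F : Type*) {V : Type*} [Field F] [AddCommGroup V] [Module F V]
    (A : V → ℝ) : Prop :=
  IsFuzzySet A ∧
    ∀ α ∈ Set.Icc (0 : ℝ) 1, (levelCut A α).Nonempty → IsFLinearSubspaceSet F (levelCut A α)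

/-- The Euclidean dual of a set of vectors in `F^n`. -/
def dualSet {F : Type*} [Field F] {n : ℕ} (S : Set (Fin n → F)) : Set (Fin n → F) :=
  {y | ∀ x ∈ S, ∑ i, x i * y i = 0}

/-- `B` is orthogonal to `A` (written `A ⊥ B`): the image of `B` is
`{1 - c : c ∈ Im A}` and `B_{1-t} = (A_t)^⊥` for every `t ∈ Im A`. -/
def FuzzyOrth {F : Type*} [Field F] {n : ℕ} (A B : (Fin n → F) → ℝ) : Prop :=
  Set.range B = (fun c => 1 - c) '' Set.range A ∧
    ∀ t ∈ Set.range A, levelCut B (1 - t) = dualSet (levelCut A t)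

/-- Writing `B x = 1 - t` with `t ∈ Im A`, the point `x` lies in `B_{1-t} = (A_t)^⊥ = C_{1-t}`. -/
theorem FuzzyOrth.le {F : Type*} [Field F] {n : ℕ} {A B C : (Fin n → F) → ℝ}
    (hAB : FuzzyOrth A B) (hAC : FuzzyOrth A C) : B ≤ C := by
  intro x
  obtain ⟨t, ht, hBx⟩ : B x ∈ (fun c => 1 - c) '' Set.range A := hAB.1 ▸ ⟨x, rfl⟩
  have hx : x ∈ levelCut C (1 - t) := by
    rw [hAC.2 t ht, ← hAB.2 t ht]
    exact hBx.le
  calc B x = 1 - t := hBx.symm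
    _ ≤ C x := hx

theorem orthogonal_fuzzyLinearCode_unique_general
    {F : Type} [Field F] {n : ℕ}
    (A B C : (Fin n → F) → ℝ)
    (hAB : FuzzyOrth A B) (hAC : FuzzyOrth A C) :
    B = C :=
  le_antisymm (hAB.le hAC) (hAC.le hAB)

/-- the fuzzy linear code orthogonal to `A` is unique: if `A ⊥ B` and
`A ⊥ C`, then `B = C`. -/
theorem orthogonal_fuzzyLinearCode_unique
    {F : Type} [Field F] [Fintype F] {n : ℕ} (hn : 0 < n)
    (A B C : (Fin n → F) → ℝ)
    (hA : IsFuzzyLinearCode F A) (hB : IsFuzzyLinearCode F B) (hC : IsFuzzyLinearCode F C)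
    (hAB : FuzzyOrth A B) (hAC : FuzzyOrth A C) :
    B = C :=
  orthogonal_fuzzyLinearCode_unique_general A B C hAB hAC
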